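/- arXiv:2004.00296 — 5 statements merged into one kernel-verified Lean document; each statement's English description precedes it below -/
import Mathlib

section
/- Let n ≥ 2 and N ≥ 2 be integers, let G be a simple undirected graph on {1,…,N} with symmetric edge weights k_ij = k_ji > 0, and let x_1,…,x_N be unit vectors in ℝ^{n+1}. Then the largest eigenvalue β(x) of the real symmetric matrix B(x) satisfies β(x) ≥ (2/(N(n+1))) Σ_{{i,j}∈E} k_ij (n − 1 − ⟨x_i, x_j⟩)(1 − ⟨x_i, x_j⟩), where the sum ranges over the edges of G. -/
open Matrix BigOperators Real

noncomputable section

/-- The orthogonal projection `I - x xᵀ` onto the hyperplane orthogonal to `x`. -/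
def proj {n : ℕ} (x : Fin (n + 1) → ℝ) : Matrix (Fin (n + 1)) (Fin (n + 1)) ℝ :=
  1 - Matrix.vecMulVec x x

/-- The linearization `B(x)` of the homogeneous Lohe model, as an
`N(n+1) × N(n+1)` block matrix indexed by `Fin N × Fin (n+1)`. -/
def Bmat {n N : ℕ} (G : SimpleGraph (Fin N)) [DecidableRel G.Adj]
    (k : Fin N → Fin N → ℝ) (x : Fin N → Fin (n + 1) → ℝ) :
    Matrix (Fin N × Fin (n + 1)) (Fin N × Fin (n + 1)) ℝ :=
  Matrix.of fun p q =>
    if p.1 = q.1 then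
      ((-(∑ l ∈ G.neighborFinset p.1, k p.1 l * (x l ⬝ᵥ x p.1))) • proj (x p.1)) p.2 q.2
    else if G.Adj p.1 q.1 then
      (k p.1 q.1 • (proj (x p.1) * proj (x q.1))) p.2 q.2
    else 0

/-!
Test `B(x)` against the vectors `v_a`, `a = 0, …, n`, whose `i`-th block is the projection
`P_i e_a` of the `a`-th basis vector onto the tangent space at `x_i`, where `P_i = I - x_i x_iᵀ`.
Since `P_i² = P_i`, every block of `B(x)` has the form `B_ij = w_ij P_i P_j`, and
`Σ_a v_aᵀ B v_a = Σ_{i,j} w_ij ‖P_i P_j‖_F² = Σ_{i,j} w_ij (n - 1 + ⟨x_i, x_j⟩²)`, which collapses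
to the ordered edge sum `T`; meanwhile `Σ_a |v_a|² = Σ_i tr P_i = N n`. The Rayleigh bound gives
`T ≤ β N n`, and `T ≥ 0` because `⟨x_i, x_j⟩ ≤ 1` and `n ≥ 2`, so `β ≥ T / (N n) ≥ T / (N (n + 1))`.
-/

theorem Matrix.IsHermitian.dotProduct_mulVec_le_sup'_eigenvalues_mul
    {m : Type*} [Fintype m] [DecidableEq m] {A : Matrix m m ℝ} (hA : A.IsHermitian)
    (h : Finset.univ.Nonempty) (v : m → ℝ) :
    v ⬝ᵥ A *ᵥ v ≤ Finset.univ.sup' h hA.eigenvalues * (v ⬝ᵥ v) := by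
  set β := Finset.univ.sup' h hA.eigenvalues
  set U : Matrix m m ℝ := (hA.eigenvectorUnitary : Matrix m m ℝ)
  have hgap : (β • 1 - A).PosSemidef := by
    have hdiag : (diagonal fun i => β - hA.eigenvalues i).PosSemidef :=
      posSemidef_diagonal_iff.mpr fun i => sub_nonneg.mpr (Finset.le_sup' _ (Finset.mem_univ i))
    convert hdiag.mul_mul_conjTranspose_same U using 1
    have hU : U * star U = 1 := Unitary.mul_star_self_of_mem hA.eigenvectorUnitary.2
    have hdiag_sub :
        (diagonal fun i => β - hA.eigenvalues i) = β • 1 - diagonal hA.eigenvalues := by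
      ext i j; by_cases hij : i = j <;> simp [hij, diagonal]
    conv_lhs => rw [hA.spectral_theorem]
    rw [hdiag_sub, ← star_eq_conjTranspose, mul_sub, sub_mul, mul_smul_comm, mul_one,
      smul_mul_assoc, hU]
    simp [Unitary.conjStarAlgAut_apply, U]
  have := hgap.dotProduct_mulVec_nonneg v
  simp only [star_trivial, sub_mulVec, smul_mulVec, one_mulVec, dotProduct_sub, dotProduct_smul,
    smul_eq_mul] at this
  linarith

theorem Matrix.sum_dotProduct_mulVec {m α R : Type*} [Fintype m] [Fintype α] [CommSemiring R]
    (A : Matrix m m R) (v : α → m → R) :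
    ∑ a, v a ⬝ᵥ A *ᵥ v a = ∑ p, ∑ q, A p q * ∑ a, v a p * v a q := by
  simp only [dotProduct, mulVec, Finset.mul_sum]
  rw [Finset.sum_comm]
  refine Finset.sum_congr rfl fun p _ => ?_
  rw [Finset.sum_comm]
  exact Finset.sum_congr rfl fun q _ => Finset.sum_congr rfl fun a _ => by ring

section Projection

variable {n : ℕ} {y z : Fin (n + 1) → ℝ}

theorem proj_transpose (y : Fin (n + 1) → ℝ) : (proj y)ᵀ = proj y := by
  simp [proj]

theorem proj_mul_proj (y z : Fin (n + 1) → ℝ) :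
    proj y * proj z = 1 - vecMulVec y y - vecMulVec z z + vecMulVec y ((y ⬝ᵥ z) • z) := by
  simp only [proj, sub_mul, mul_sub, one_mul, mul_one, vecMulVec_mul_vecMulVec]
  abel

theorem proj_mul_self (hy : y ⬝ᵥ y = 1) : proj y * proj y = proj y := by
  rw [proj_mul_proj, hy, one_smul, proj]
  abel

theorem trace_proj (hy : y ⬝ᵥ y = 1) : trace (proj y) = n := by
  simp [proj, hy]

theorem trace_proj_mul_proj (hy : y ⬝ᵥ y = 1) (hz : z ⬝ᵥ z = 1) :
    trace (proj y * proj z) = n - 1 + (y ⬝ᵥ z) ^ 2 := by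
  simp only [proj_mul_proj, trace_add, trace_sub, trace_one, trace_vecMulVec, hy, hz,
    dotProduct_smul, smul_eq_mul, Fintype.card_fin]
  push_cast
  ring

theorem sum_sq_proj_mul_proj_apply (hy : y ⬝ᵥ y = 1) (hz : z ⬝ᵥ z = 1) :
    ∑ b, ∑ c, (proj y * proj z) b c ^ 2 = n - 1 + (y ⬝ᵥ z) ^ 2 := by
  have hfrob : ∑ b, ∑ c, (proj y * proj z) b c ^ 2
      = trace (proj y * proj z * (proj y * proj z)ᵀ) := by
    simp only [trace, diag, mul_apply (M := proj y * proj z), transpose_apply, sq]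
  rw [hfrob, transpose_mul, proj_transpose, proj_transpose, ← mul_assoc, mul_assoc (proj y),
    proj_mul_self hz, trace_mul_cycle, proj_mul_self hy, trace_proj_mul_proj hy hz]

theorem dotProduct_le_one (hy : y ⬝ᵥ y = 1) (hz : z ⬝ᵥ z = 1) : y ⬝ᵥ z ≤ 1 := by
  have := dotProduct_self_star_nonneg (y - z)
  simp only [star_trivial, sub_dotProduct, dotProduct_sub, hy, hz, dotProduct_comm z y] at this
  linarith

end Projection

section Linearization

variable {n N : ℕ} (G : SimpleGraph (Fin N)) [DecidableRel G.Adj] (k : Fin N → Fin N → ℝ)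
  (x : Fin N → Fin (n + 1) → ℝ)

def blockCoeff (i j : Fin N) : ℝ :=
  if i = j then -∑ l ∈ G.neighborFinset i, k i l * (x l ⬝ᵥ x i)
  else if G.Adj i j then k i j else 0

def tangentField (a : Fin (n + 1)) : Fin N × Fin (n + 1) → ℝ :=
  fun p => proj (x p.1) p.2 a

variable {x}

theorem Bmat_apply (hunit : ∀ i, x i ⬝ᵥ x i = 1) (i j : Fin N) (b c : Fin (n + 1)) :
    Bmat G k x (i, b) (j, c) = blockCoeff G k x i j * (proj (x i) * proj (x j)) b c := by
  by_cases hij : i = j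
  · subst hij
    simp [Bmat, blockCoeff, proj_mul_self (hunit i)]
  · by_cases hadj : G.Adj i j <;> simp [Bmat, blockCoeff, hij, hadj]

theorem sum_tangentField_mul (p q : Fin N × Fin (n + 1)) :
    ∑ a, tangentField x a p * tangentField x a q = (proj (x p.1) * proj (x q.1)) p.2 q.2 := by
  simp only [tangentField, mul_apply]
  refine Finset.sum_congr rfl fun a _ => ?_
  rw [← proj_transpose (x q.1), transpose_apply, proj_transpose]

theorem sum_tangentField_dotProduct_self (hunit : ∀ i, x i ⬝ᵥ x i = 1) :
    ∑ a, tangentField x a ⬝ᵥ tangentField x a = N * n := by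
  have hdiag (p : Fin N × Fin (n + 1)) : ∑ a, tangentField x a p * tangentField x a p
      = proj (x p.1) p.2 p.2 := by
    rw [sum_tangentField_mul, proj_mul_self (hunit p.1)]
  simp only [dotProduct]
  rw [Finset.sum_comm]
  simp only [hdiag, Fintype.sum_prod_type]
  have htrace (i : Fin N) : ∑ b, proj (x i) b b = n := trace_proj (hunit i)
  simp [htrace]

theorem sum_blockCoeff_mul (hunit : ∀ i, x i ⬝ᵥ x i = 1) (i : Fin N) :
    ∑ j, blockCoeff G k x i j * (n - 1 + (x i ⬝ᵥ x j) ^ 2)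
      = ∑ j ∈ G.neighborFinset i, k i j * ((n - 1 - x i ⬝ᵥ x j) * (1 - x i ⬝ᵥ x j)) := by
  have hsplit (j : Fin N) : blockCoeff G k x i j * (n - 1 + (x i ⬝ᵥ x j) ^ 2)
      = (if i = j then -(∑ l ∈ G.neighborFinset i, k i l * (x l ⬝ᵥ x i)) * n else 0)
        + (if G.Adj i j then k i j * (n - 1 + (x i ⬝ᵥ x j) ^ 2) else 0) := by
    by_cases hij : i = j
    · subst hij
      simp [blockCoeff, hunit i]
    · by_cases hadj : G.Adj i j <;> simp [blockCoeff, hij, hadj]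
  simp only [hsplit, Finset.sum_add_distrib, Finset.sum_ite_eq, Finset.mem_univ, if_true,
    ← Finset.sum_filter, ← G.neighborFinset_eq_filter, Finset.sum_mul, ← Finset.sum_neg_distrib]
  rw [← Finset.sum_add_distrib]
  refine Finset.sum_congr rfl fun j _ => ?_
  rw [dotProduct_comm (x j)]
  ring

theorem sum_tangentField_dotProduct_Bmat_mulVec (hunit : ∀ i, x i ⬝ᵥ x i = 1) :
    ∑ a, tangentField x a ⬝ᵥ Bmat G k x *ᵥ tangentField x a
      = ∑ i, ∑ j ∈ G.neighborFinset i, k i j * ((n - 1 - x i ⬝ᵥ x j) * (1 - x i ⬝ᵥ x j)) := by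
  simp only [sum_dotProduct_mulVec, sum_tangentField_mul, Fintype.sum_prod_type,
    Bmat_apply G k hunit]
  refine Finset.sum_congr rfl fun i _ => ?_
  rw [← sum_blockCoeff_mul G k hunit, Finset.sum_comm]
  refine Finset.sum_congr rfl fun j _ => ?_
  rw [← sum_sq_proj_mul_proj_apply (hunit i) (hunit j), Finset.mul_sum]
  refine Finset.sum_congr rfl fun b _ => ?_
  rw [Finset.mul_sum]
  exact Finset.sum_congr rfl fun c _ => by ring

theorem sum_edge_nonneg (hn : 2 ≤ n) (hpos : ∀ i j, G.Adj i j → 0 < k i j)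
    (hunit : ∀ i, x i ⬝ᵥ x i = 1) :
    0 ≤ ∑ i, ∑ j ∈ G.neighborFinset i, k i j * ((n - 1 - x i ⬝ᵥ x j) * (1 - x i ⬝ᵥ x j)) := by
  have hn' : (2 : ℝ) ≤ n := by exact_mod_cast hn
  refine Finset.sum_nonneg fun i _ => Finset.sum_nonneg fun j hj => ?_
  have hc := dotProduct_le_one (hunit i) (hunit j)
  exact mul_nonneg (hpos i j ((G.mem_neighborFinset i j).mp hj)).le
    (mul_nonneg (by linarith) (by linarith))

end Linearization

/-- The sum over the (unordered) edges of `G` is written as half of the sum over ordered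
adjacent pairs. -/
theorem largest_eigenvalue_lower_bound
    {n N : ℕ} (hn : 2 ≤ n) (hN : 2 ≤ N)
    (G : SimpleGraph (Fin N)) [DecidableRel G.Adj]
    (k : Fin N → Fin N → ℝ)
    (hpos : ∀ i j, G.Adj i j → 0 < k i j)
    (x : Fin N → Fin (n + 1) → ℝ) (hunit : ∀ i, x i ⬝ᵥ x i = 1)
    (hB : (Bmat G k x).IsHermitian) :
    2 / ((N : ℝ) * ((n : ℝ) + 1)) *
        ((1 : ℝ) / 2 * ∑ i, ∑ j ∈ G.neighborFinset i,
          k i j * (((n : ℝ) - 1 - x i ⬝ᵥ x j) * (1 - x i ⬝ᵥ x j)))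
      ≤ Finset.univ.sup' ⟨(⟨0, by omega⟩, (0 : Fin (n + 1))), Finset.mem_univ _⟩
          hB.eigenvalues := by
  set β := Finset.univ.sup' ⟨(⟨0, by omega⟩, 0), Finset.mem_univ _⟩ hB.eigenvalues
  set T := ∑ i, ∑ j ∈ G.neighborFinset i,
    k i j * (((n : ℝ) - 1 - x i ⬝ᵥ x j) * (1 - x i ⬝ᵥ x j))
  have hT : 0 ≤ T := sum_edge_nonneg G k hn hpos hunit
  have hTβ : T ≤ β * (N * n) := calc
    T = ∑ a, tangentField x a ⬝ᵥ Bmat G k x *ᵥ tangentField x a :=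
      (sum_tangentField_dotProduct_Bmat_mulVec G k hunit).symm
    _ ≤ ∑ a, β * (tangentField x a ⬝ᵥ tangentField x a) := Finset.sum_le_sum fun a _ =>
      hB.dotProduct_mulVec_le_sup'_eigenvalues_mul _ _
    _ = β * (N * n) := by rw [← Finset.mul_sum, sum_tangentField_dotProduct_self hunit]
  have hNn : (0 : ℝ) < N * n := mul_pos (by norm_cast; omega) (by norm_cast; omega)
  calc 2 / ((N : ℝ) * (n + 1)) * (1 / 2 * T) = T / (N * (n + 1)) := by ring
    _ ≤ T / (N * n) := div_le_div_of_nonneg_left hT hNn (by gcongr; linarith)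
    _ ≤ β := (div_le_iff₀ hNn).mpr hTβ
end
end

section
/- Let n ≥ 2 and N ≥ 2 be integers and let θ_1,…,θ_N ∈ [0, π] satisfy Σ_{i=1}^N θ_i = π. Then Σ_{i=1}^N (n − 1 − cos θ_i)(1 − cos θ_i) ≥ N (n − 1 − cos(π/N))(1 − cos(π/N)); that is, the minimum of the left-hand side over the constraint set is attained when all angles are equal to π/N. -/
/-!
With `xᵢ = 1 - cos θᵢ` the summand is `(n - 2) xᵢ + xᵢ²`, which is increasing and convex for
`xᵢ ≥ 0`; by Cauchy–Schwarz it therefore suffices to show `∑ cos θᵢ ≤ N cos (π / N)`.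
If every `θᵢ ≤ π / 2` this is Jensen's inequality for `cos`, concave on `[-π/2, π/2]`.
Otherwise exactly one angle `π - σ` is obtuse and the others sum to `σ ≤ π / 2`, so Jensen gives
`∑ cos θᵢ ≤ (N - 1) cos (σ / (N - 1)) - cos σ`. This bound increases with `σ`, and at `σ = π / 2`
concavity of `cos` once more bounds it by `N cos (π / N)`.
-/

open Real Finset

theorem ConcaveOn.sum_le_card_mul_map_div {ι : Type*} {s : Set ℝ} {f : ℝ → ℝ}
    (hf : ConcaveOn ℝ s f) (t : Finset ι) (p : ι → ℝ) (hp : ∀ i ∈ t, p i ∈ s) :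
    ∑ i ∈ t, f (p i) ≤ #t * f ((∑ i ∈ t, p i) / #t) := by
  rcases t.eq_empty_or_nonempty with rfl | ht
  · simp
  have hcard : (0 : ℝ) < #t := by exact_mod_cast ht.card_pos
  have h := hf.le_map_sum (t := t) (w := fun _ => (#t : ℝ)⁻¹) (p := p)
    (fun _ _ => by positivity) (by simp [hcard.ne']) hp
  simp only [smul_eq_mul, ← mul_sum] at h
  rw [div_eq_inv_mul]
  calc ∑ i ∈ t, f (p i) = #t * ((#t : ℝ)⁻¹ * ∑ i ∈ t, f (p i)) := by field_simp
    _ ≤ _ := by gcongr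

theorem monotoneOn_mul_cos_div_sub_cos {m : ℝ} (hm : 1 ≤ m) :
    MonotoneOn (fun σ => m * cos (σ / m) - cos σ) (Set.Icc 0 (π / 2)) := by
  have hderiv : ∀ σ, HasDerivAt (fun σ => m * cos (σ / m) - cos σ)
      (sin σ - sin (σ / m)) σ := fun σ => by
    refine ((((hasDerivAt_id' σ).div_const m).cos.const_mul m).sub
      (hasDerivAt_id' σ).cos).congr_deriv ?_
    field_simp
    ring
  refine monotoneOn_of_deriv_nonneg (convex_Icc _ _)
    (fun σ _ => (hderiv σ).continuousAt.continuousWithinAt)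
    (fun σ _ => (hderiv σ).differentiableAt.differentiableWithinAt) fun σ hσ => ?_
  rw [interior_Icc] at hσ
  have hσm_nonneg : 0 ≤ σ / m := div_nonneg hσ.1.le (by linarith)
  rw [(hderiv σ).deriv, sub_nonneg]
  exact sin_le_sin_of_le_of_le_pi_div_two (by linarith [pi_pos]) hσ.2.le
    (div_le_self hσ.1.le hm)

theorem sub_one_mul_cos_le_mul_cos_pi_div {m : ℝ} (hm : 2 ≤ m) :
    (m - 1) * cos (π / 2 / (m - 1)) ≤ m * cos (π / m) := by
  have hm1 : 0 < m - 1 := by linarith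
  have hx : π / 2 / (m - 1) ∈ Set.Icc (-(π / 2)) (π / 2) := by
    refine ⟨by linarith [div_nonneg (div_nonneg pi_pos.le two_pos.le) hm1.le, pi_pos], ?_⟩
    exact div_le_self (by positivity) (by linarith)
  have hy : π / 2 ∈ Set.Icc (-(π / 2)) (π / 2) := ⟨by linarith [pi_pos], le_rfl⟩
  have h := strictConcaveOn_cos_Icc.concaveOn.2 hx hy
    (by positivity : 0 ≤ (m - 1) / m) (by positivity : 0 ≤ 1 / m) (by field_simp; ring)
  have hmean : (m - 1) / m * (π / 2 / (m - 1)) + 1 / m * (π / 2) = π / m := by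
    field_simp; ring
  simp only [smul_eq_mul, hmean, cos_pi_div_two, mul_zero, add_zero] at h
  have hm0 : 0 < m := by linarith
  calc (m - 1) * cos (π / 2 / (m - 1)) = m * ((m - 1) / m * cos (π / 2 / (m - 1))) := by
        field_simp
    _ ≤ m * cos (π / m) := by gcongr

theorem sum_cos_le_card_mul_cos_pi_div {ι : Type*} (t : Finset ι) (ht : 2 ≤ #t) (θ : ι → ℝ)
    (hθ : ∀ i ∈ t, θ i ∈ Set.Icc 0 π) (hsum : ∑ i ∈ t, θ i = π) :
    ∑ i ∈ t, cos (θ i) ≤ #t * cos (π / #t) := by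
  classical
  have hconcave := strictConcaveOn_cos_Icc.concaveOn
  by_cases hacute : ∀ i ∈ t, θ i ≤ π / 2
  · simpa only [hsum] using hconcave.sum_le_card_mul_map_div t θ
      fun i hi => ⟨by linarith [(hθ i hi).1, pi_pos], hacute i hi⟩
  push Not at hacute
  obtain ⟨j, hj, hobtuse⟩ := hacute
  set σ := π - θ j
  have hσ_nonneg : 0 ≤ σ := by linarith [(hθ j hj).2]
  have hσ_le : σ ≤ π / 2 := by linarith
  have hrest : ∑ i ∈ t.erase j, θ i = σ := by
    linarith [sum_erase_add t θ hj]
  have hrest_mem : ∀ i ∈ t.erase j, θ i ∈ Set.Icc (-(π / 2)) (π / 2) := fun i hi => by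
    have hi_le : θ i ≤ σ := hrest ▸ single_le_sum (fun k hk => (hθ k (mem_of_mem_erase hk)).1) hi
    exact ⟨by linarith [(hθ i (mem_of_mem_erase hi)).1, pi_pos], by linarith⟩
  have hcard : (#(t.erase j) : ℝ) = #t - 1 := by
    rw [card_erase_of_mem hj, Nat.cast_sub (by omega), Nat.cast_one]
  have hcard_two : (2 : ℝ) ≤ #t := by exact_mod_cast ht
  calc ∑ i ∈ t, cos (θ i) = ∑ i ∈ t.erase j, cos (θ i) + cos (θ j) := (sum_erase_add t _ hj).symm
    _ ≤ (#t - 1) * cos (σ / (#t - 1)) - cos σ := by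
        have h := hconcave.sum_le_card_mul_map_div (t.erase j) θ hrest_mem
        rw [hrest, hcard] at h
        rw [show θ j = π - σ by ring, cos_pi_sub]
        linarith
    _ ≤ (#t - 1) * cos (π / 2 / (#t - 1)) - cos (π / 2) :=
        monotoneOn_mul_cos_div_sub_cos (by linarith) ⟨hσ_nonneg, hσ_le⟩
          ⟨by positivity, le_rfl⟩ hσ_le
    _ ≤ #t * cos (π / #t) := by
        simpa only [cos_pi_div_two, sub_zero] using sub_one_mul_cos_le_mul_cos_pi_div hcard_two

theorem card_mul_add_mul_le_sum_add_mul {ι : Type*} (t : Finset ι) (f : ι → ℝ) {a m : ℝ}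
    (ha : 0 ≤ a) (hm : 0 ≤ m) (hf : #t * m ≤ ∑ i ∈ t, f i) :
    #t * ((a + m) * m) ≤ ∑ i ∈ t, (a + f i) * f i := by
  have hsq : #t * m ^ 2 ≤ ∑ i ∈ t, f i ^ 2 := by
    rcases t.eq_empty_or_nonempty with rfl | ht
    · simp
    have hcard : (0 : ℝ) < #t := by exact_mod_cast ht.card_pos
    refine le_of_mul_le_mul_left ?_ hcard
    calc #t * (#t * m ^ 2) = (#t * m) ^ 2 := by ring
      _ ≤ (∑ i ∈ t, f i) ^ 2 := by gcongr
      _ ≤ #t * ∑ i ∈ t, f i ^ 2 := sq_sum_le_card_mul_sum_sq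
  calc #t * ((a + m) * m) = a * (#t * m) + #t * m ^ 2 := by ring
    _ ≤ a * ∑ i ∈ t, f i + ∑ i ∈ t, f i ^ 2 := by gcongr
    _ = ∑ i ∈ t, (a + f i) * f i := by
        rw [mul_sum, ← sum_add_distrib]
        exact sum_congr rfl fun _ _ => by ring

/-- For angles `θ₁, …, θ_N ∈ [0, π]` summing to `π`, the objective
`Σᵢ (n − 1 − cos θᵢ)(1 − cos θᵢ)` is minimized at the equal-angle configuration
`θᵢ = π/N`. -/
theorem angle_optimization_equal_angles
    {n N : ℕ} (hn : 2 ≤ n) (hN : 2 ≤ N)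
    (θ : Fin N → ℝ) (hθ : ∀ i, θ i ∈ Set.Icc 0 π)
    (hsum : ∑ i, θ i = π) :
    (N : ℝ) * (((n : ℝ) - 1 - Real.cos (π / (N : ℝ))) * (1 - Real.cos (π / (N : ℝ))))
      ≤ ∑ i, ((n : ℝ) - 1 - Real.cos (θ i)) * (1 - Real.cos (θ i)) := by
  have hcos := sum_cos_le_card_mul_cos_pi_div univ (by simpa using hN) θ (fun i _ => hθ i) hsum
  rw [card_univ, Fintype.card_fin] at hcos
  have hn_sub : (0 : ℝ) ≤ n - 2 := by
    rw [sub_nonneg]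
    exact_mod_cast hn
  have hquad := card_mul_add_mul_le_sum_add_mul univ (fun i => 1 - cos (θ i)) hn_sub
    (sub_nonneg.2 (cos_le_one (π / N))) (by
      simp only [sum_sub_distrib, card_univ, Fintype.card_fin, sum_const, nsmul_eq_mul, mul_one]
      linarith)
  rw [card_univ, Fintype.card_fin] at hquad
  calc (N : ℝ) * ((n - 1 - cos (π / N)) * (1 - cos (π / N)))
      = N * ((n - 2 + (1 - cos (π / N))) * (1 - cos (π / N))) := by ring
    _ ≤ ∑ i, (n - 2 + (1 - cos (θ i))) * (1 - cos (θ i)) := hquad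
    _ = _ := sum_congr rfl fun i _ => by ring
end

section
/- Let n ≥ 1 and let x_1,…,x_N be unit vectors in ℝ^{n+1} (N ≥ 1). If Σ_{i=1}^{N−1} arccos⟨x_i, x_{i+1}⟩ < π, then the configuration is not dispersed; that is, there exists a nonzero vector y ∈ ℝ^{n+1} with ⟨x_i, y⟩ > 0 for all i = 1,…,N. Equivalently, if unit vectors x_1,…,x_N are dispersed, then every chain visiting all of them in some order has total angular length Σ arccos⟨x_{i_j}, x_{i_{j+1}}⟩ ≥ π. -/
/-!
Let `L < π` be the angular length of the chain `x₀, …, x_M`, and let `y` be the point at arc length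
`L / 2` along the spherical polygon `x₀ x₁ ⋯ x_M`. Every `xᵢ` is joined to `y` along the polygon by
a path of angular length at most `L / 2`, so the triangle inequality for angles gives
`∠(xᵢ, y) ≤ L / 2 < π / 2`, i.e. `⟨xᵢ, y⟩ > 0`. The point `y` exists by the intermediate value
theorem: along a segment `[u, v]` the angles to `u` and to `v` add up to `∠(u, v)`.
-/

open Matrix Real BigOperators

open InnerProductGeometry Set

theorem Nat.exists_lt_le_and_le_succ {α : Type*} [LinearOrder α] {f : ℕ → α} {n : ℕ} {a : α}
    (hn : 0 < n) (h0 : f 0 ≤ a) (ha : a ≤ f n) : ∃ k < n, f k ≤ a ∧ a ≤ f (k + 1) := by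
  have hex : ∃ k, a ≤ f (k + 1) := ⟨n - 1, by rwa [Nat.sub_add_cancel hn]⟩
  refine ⟨Nat.find hex, ?_, ?_, Nat.find_spec hex⟩
  · exact (Nat.find_min' hex (m := n - 1) (by rwa [Nat.sub_add_cancel hn])).trans_lt (by omega)
  · match hk : Nat.find hex with
    | 0 => exact h0
    | k + 1 => exact (not_le.1 (Nat.find_min hex (m := k) (by omega))).le

variable {V : Type*} [NormedAddCommGroup V] [InnerProductSpace ℝ V]

theorem inner_pos_of_angle_lt_pi_div_two {x y : V} (h : angle x y < π / 2) :
    0 < inner ℝ x y := by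
  rw [angle, arccos_lt_pi_div_two] at h
  by_contra! hxy
  exact h.not_ge (div_nonpos_of_nonpos_of_nonneg hxy (by positivity))

theorem ne_zero_of_mem_segment_of_angle_ne_pi {u v z : V} (hu : u ≠ 0) (hv : v ≠ 0)
    (huv : angle u v ≠ π) (hz : z ∈ segment ℝ u v) : z ≠ 0 := by
  rintro rfl
  have h : Sbtw ℝ u 0 v := ⟨mem_segment_iff_wbtw.1 hz, hu.symm, hv.symm⟩
  exact huv (by simpa [EuclideanGeometry.angle] using h.angle₁₂₃_eq_pi)

theorem mem_span_nnreal_of_mem_segment {u v z : V} (hz : z ∈ segment ℝ u v) :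
    z ∈ Submodule.span NNReal {u, v} := by
  obtain ⟨a, b, ha, hb, -, rfl⟩ := hz
  exact Submodule.mem_span_pair.2 ⟨⟨a, ha⟩, ⟨b, hb⟩, rfl⟩

theorem exists_angle_eq_and_angle_eq_sub {u v : V} (hu : u ≠ 0) (hv : v ≠ 0)
    (huv : angle u v ≠ π) {t : ℝ} (ht : t ∈ Icc 0 (angle u v)) :
    ∃ y ≠ 0, angle u y = t ∧ angle y v = angle u v - t := by
  have hcont : ContinuousOn (angle u) (segment ℝ u v) := fun z hz =>
    ((continuousAt_angle (x := (u, z)) hu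
      (ne_zero_of_mem_segment_of_angle_ne_pi hu hv huv hz)).comp
      (continuous_const.prodMk continuous_id).continuousAt).continuousWithinAt
  rw [← angle_self hu] at ht
  obtain ⟨y, hy, rfl⟩ := (convex_segment u v).isPreconnected.intermediate_value
    (left_mem_segment ℝ u v) (right_mem_segment ℝ u v) hcont ht
  have hy0 := ne_zero_of_mem_segment_of_angle_ne_pi hu hv huv hy
  refine ⟨y, hy0, rfl, ?_⟩
  rw [angle_eq_angle_add_add_angle_add_of_mem_span hy0 (mem_span_nnreal_of_mem_segment hy)]
  ring

noncomputable def chainLength (x : ℕ → V) (i : ℕ) : ℝ :=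
  ∑ k ∈ Finset.range i, angle (x k) (x (k + 1))

namespace chainLength

variable (x : ℕ → V)

@[simp]
theorem zero : chainLength x 0 = 0 := rfl

theorem succ (i : ℕ) : chainLength x (i + 1) = chainLength x i + angle (x i) (x (i + 1)) :=
  Finset.sum_range_succ _ _

theorem mono : Monotone (chainLength x) :=
  monotone_nat_of_le_succ fun i => by simpa [succ] using angle_nonneg _ _

theorem nonneg (i : ℕ) : 0 ≤ chainLength x i := zero x ▸ mono x (Nat.zero_le i)

theorem angle_le_sub {x : ℕ → V} {i j : ℕ} (hi : x i ≠ 0) (hij : i ≤ j) :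
    angle (x i) (x j) ≤ chainLength x j - chainLength x i := by
  induction j, hij using Nat.le_induction with
  | base => simp [angle_self hi]
  | succ j _ ih =>
    calc angle (x i) (x (j + 1)) ≤ angle (x i) (x j) + angle (x j) (x (j + 1)) :=
          angle_le_angle_add_angle _ _ _
      _ ≤ chainLength x (j + 1) - chainLength x i := by rw [succ]; linarith

end chainLength

theorem exists_forall_angle_le_half_chainLength {x : ℕ → V} (hx : ∀ i, x i ≠ 0) {M : ℕ}
    (hM : chainLength x M < π) : ∃ y ≠ 0, ∀ i ≤ M, angle (x i) y ≤ chainLength x M / 2 := by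
  rcases M.eq_zero_or_pos with rfl | hM0
  · exact ⟨x 0, hx 0, fun i hi => by simp [Nat.le_zero.1 hi, angle_self (hx 0)]⟩
  set L := chainLength x M
  have hL : 0 ≤ L := chainLength.nonneg x M
  obtain ⟨k, hkM, hk, hk1⟩ := Nat.exists_lt_le_and_le_succ hM0 (f := chainLength x) (a := L / 2)
    (by rw [chainLength.zero]; linarith) (by linarith)
  have hLk : chainLength x (k + 1) ≤ L := chainLength.mono x hkM
  have hstep : angle (x k) (x (k + 1)) ≠ π := by
    linarith [chainLength.succ x k, chainLength.nonneg x k]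
  obtain ⟨y, hy, hky, hyk⟩ := exists_angle_eq_and_angle_eq_sub (hx k) (hx (k + 1)) hstep
    (t := L / 2 - chainLength x k) ⟨by linarith, by linarith [chainLength.succ x k]⟩
  refine ⟨y, hy, fun i hi => ?_⟩
  rcases le_or_gt i k with hik | hki
  · calc angle (x i) y ≤ angle (x i) (x k) + angle (x k) y := angle_le_angle_add_angle _ _ _
      _ ≤ (chainLength x k - chainLength x i) + (L / 2 - chainLength x k) :=
          add_le_add (chainLength.angle_le_sub (hx i) hik) hky.le
      _ ≤ L / 2 := by linarith [chainLength.nonneg x i]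
  · calc angle (x i) y = angle y (x i) := angle_comm _ _
      _ ≤ angle y (x (k + 1)) + angle (x (k + 1)) (x i) := angle_le_angle_add_angle _ _ _
      _ ≤ (chainLength x (k + 1) - L / 2) + (chainLength x i - chainLength x (k + 1)) := by
          refine add_le_add (by rw [hyk, chainLength.succ]; linarith) ?_
          exact chainLength.angle_le_sub (hx _) hki
      _ ≤ L / 2 := by linarith [chainLength.mono x hi]

theorem exists_forall_inner_pos_of_chainLength_lt_pi {x : ℕ → V} (hx : ∀ i, x i ≠ 0) {M : ℕ}
    (hM : chainLength x M < π) : ∃ y ≠ 0, ∀ i ≤ M, 0 < inner ℝ (x i) y := by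
  obtain ⟨y, hy, hxy⟩ := exists_forall_angle_le_half_chainLength hx hM
  exact ⟨y, hy, fun i hi => inner_pos_of_angle_lt_pi_div_two ((hxy i hi).trans_lt (by linarith))⟩

theorem exists_forall_inner_pos_of_sum_angle_lt_pi {M : ℕ} {x : Fin (M + 1) → V}
    (hx : ∀ i, x i ≠ 0) (h : ∑ i : Fin M, angle (x i.castSucc) (x i.succ) < π) :
    ∃ y ≠ 0, ∀ i, 0 < inner ℝ (x i) y := by
  have hclamp : ∀ i : Fin (M + 1), Fin.clamp i M = i := fun i => by
    ext; simp [Fin.coe_clamp, Nat.lt_succ_iff.1 i.isLt]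
  set x' : ℕ → V := fun k => x (Fin.clamp k M)
  have hlen : chainLength x' M = ∑ i : Fin M, angle (x i.castSucc) (x i.succ) := by
    rw [chainLength, ← Fin.sum_univ_eq_sum_range]
    refine Finset.sum_congr rfl fun i _ => ?_
    rw [← Fin.val_succ, ← Fin.val_castSucc]
    simp only [x', hclamp]
  obtain ⟨y, hy, hpos⟩ := exists_forall_inner_pos_of_chainLength_lt_pi (fun k => hx _) (hlen ▸ h)
  exact ⟨y, hy, fun i => by simpa [x', hclamp] using hpos i (Nat.lt_succ_iff.1 i.isLt)⟩

theorem exists_forall_dotProduct_pos_of_sum_arccos_lt_pi {m M : ℕ} {x : Fin (M + 1) → Fin m → ℝ}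
    (hunit : ∀ i, x i ⬝ᵥ x i = 1) (h : ∑ i : Fin M, arccos (x i.castSucc ⬝ᵥ x i.succ) < π) :
    ∃ y ≠ 0, ∀ i, 0 < x i ⬝ᵥ y := by
  set X : Fin (M + 1) → EuclideanSpace ℝ (Fin m) := fun i => WithLp.toLp 2 (x i)
  have hinner : ∀ i j, inner ℝ (X i) (X j) = x i ⬝ᵥ x j := fun i j => by
    simp [X, EuclideanSpace.inner_toLp_toLp, dotProduct_comm]
  have hnorm : ∀ i, ‖X i‖ = 1 := fun i => by
    rw [norm_eq_sqrt_real_inner, hinner, hunit, sqrt_one]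
  have hangle : ∀ i j, angle (X i) (X j) = arccos (x i ⬝ᵥ x j) := fun i j => by
    simp [angle, hnorm, hinner]
  obtain ⟨y, hy, hpos⟩ := exists_forall_inner_pos_of_sum_angle_lt_pi
    (fun i => norm_ne_zero_iff.1 ((hnorm i).trans_ne one_ne_zero)) (by simpa only [hangle])
  refine ⟨y.ofLp, by simpa using hy, fun i => ?_⟩
  simpa [X, EuclideanSpace.inner_eq_star_dotProduct, dotProduct_comm] using hpos i

theorem chain_shorter_than_pi_not_dispersed_general
    {n M : ℕ}
    (x : Fin (M + 1) → Fin (n + 1) → ℝ) (hunit : ∀ i, x i ⬝ᵥ x i = 1) :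
    ((∑ i : Fin M, Real.arccos (x i.castSucc ⬝ᵥ x i.succ)) < π →
      ∃ y : Fin (n + 1) → ℝ, y ≠ 0 ∧ ∀ i, 0 < x i ⬝ᵥ y) ∧
    ((¬ ∃ y : Fin (n + 1) → ℝ, y ≠ 0 ∧ ∀ i, 0 < x i ⬝ᵥ y) →
      ∀ σ : Equiv.Perm (Fin (M + 1)),
        π ≤ ∑ i : Fin M, Real.arccos (x (σ i.castSucc) ⬝ᵥ x (σ i.succ))) := by
  refine ⟨exists_forall_dotProduct_pos_of_sum_arccos_lt_pi hunit, fun hdispersed σ => ?_⟩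
  by_contra! hshort
  obtain ⟨y, hy, hpos⟩ :=
    exists_forall_dotProduct_pos_of_sum_arccos_lt_pi (x := x ∘ σ) (fun i => hunit _) hshort
  exact hdispersed ⟨y, hy, fun i => by simpa using hpos (σ.symm i)⟩

/-- If the chain `x₀, x₁, …, x_M` of unit vectors in `ℝ^{n+1}` has total angular length
`Σ arccos⟨xᵢ, xᵢ₊₁⟩ < π`, then the configuration is not dispersed: there is a nonzero
`y` with `⟨xᵢ, y⟩ > 0` for all `i`.  Equivalently, at a dispersed configuration every
chain visiting all the points in some order has total angular length at least `π`. -/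
theorem chain_shorter_than_pi_not_dispersed
    {n M : ℕ} (hn : 1 ≤ n)
    (x : Fin (M + 1) → Fin (n + 1) → ℝ) (hunit : ∀ i, x i ⬝ᵥ x i = 1) :
    ((∑ i : Fin M, Real.arccos (x i.castSucc ⬝ᵥ x i.succ)) < π →
      ∃ y : Fin (n + 1) → ℝ, y ≠ 0 ∧ ∀ i, 0 < x i ⬝ᵥ y) ∧
    ((¬ ∃ y : Fin (n + 1) → ℝ, y ≠ 0 ∧ ∀ i, 0 < x i ⬝ᵥ y) →
      ∀ σ : Equiv.Perm (Fin (M + 1)),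
        π ≤ ∑ i : Fin M, Real.arccos (x (σ i.castSucc) ⬝ᵥ x (σ i.succ))) :=
  chain_shorter_than_pi_not_dispersed_general x hunit
end

section
/- Let n ≥ 2 and N ≥ 5 be integers and let φ ∈ (π/2, π]. Then N (n − 1 − cos(π/N))(1 − cos(π/N)) < (N − 1)(n − 1 − cos((π − φ)/(N − 1)))(1 − cos((π − φ)/(N − 1))) + (n − 1 − cos φ)(1 − cos φ). In other words, among the two candidate critical configurations of the angle optimization, the equal-angle configuration θ_i = π/N gives a strictly smaller objective value than the configuration with one angle φ > π/2 and the remaining N − 1 angles equal to (π − φ)/(N − 1). -/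
open Real

/-- For `n ≥ 2`, `N ≥ 5` and `φ ∈ (π/2, π]`, the equal-angle configuration beats the
configuration with one angle `φ` and the other `N − 1` angles equal to `(π − φ)/(N − 1)`:
`N (n − 1 − cos(π/N))(1 − cos(π/N)) <
 (N−1)(n − 1 − cos((π−φ)/(N−1)))(1 − cos((π−φ)/(N−1))) + (n − 1 − cos φ)(1 − cos φ)`. -/
theorem equal_angles_beat_one_large_angle
    {n N : ℕ} (hn : 2 ≤ n) (hN : 5 ≤ N)
    (φ : ℝ) (hφ : φ ∈ Set.Ioc (π / 2) π) :
    (N : ℝ) * (((n : ℝ) - 1 - Real.cos (π / (N : ℝ))) * (1 - Real.cos (π / (N : ℝ))))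
      < ((N : ℝ) - 1) * (((n : ℝ) - 1 - Real.cos ((π - φ) / ((N : ℝ) - 1)))
            * (1 - Real.cos ((π - φ) / ((N : ℝ) - 1))))
        + ((n : ℝ) - 1 - Real.cos φ) * (1 - Real.cos φ) := by
  obtain ⟨hφ1, hφ2⟩ := hφ
  have hn' : (2 : ℝ) ≤ (n : ℝ) := by exact_mod_cast hn
  have hN' : (5 : ℝ) ≤ (N : ℝ) := by exact_mod_cast hN
  have hπ : (0 : ℝ) < π := Real.pi_pos
  -- LHS ≤ n - 1
  have hcosN : (0 : ℝ) ≤ Real.cos (π / N) := by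
    apply Real.cos_nonneg_of_mem_Icc
    constructor
    · have : (0:ℝ) ≤ π / N := by positivity
      linarith
    · rw [div_le_div_iff₀ (by linarith) two_pos]
      nlinarith
  have h1c : 1 - Real.cos (π / N) ≤ π ^ 2 / (2 * N ^ 2) := by
    have := Real.one_sub_sq_div_two_le_cos (x := π / N)
    have : 1 - Real.cos (π / N) ≤ (π / N) ^ 2 / 2 := by linarith
    calc 1 - Real.cos (π / N) ≤ (π / N) ^ 2 / 2 := this
      _ = π ^ 2 / (2 * N ^ 2) := by field_simp
  have hpisq : π ^ 2 ≤ 2 * N := by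
    nlinarith [Real.pi_lt_d2, Real.pi_pos]
  have hLHS : (N : ℝ) * (((n : ℝ) - 1 - Real.cos (π / N)) * (1 - Real.cos (π / N)))
      ≤ (n : ℝ) - 1 := by
    have h0 : 0 ≤ (n : ℝ) - 1 - Real.cos (π / N) := by
      have := Real.cos_le_one (π / N); linarith
    have h1 : (n : ℝ) - 1 - Real.cos (π / N) ≤ (n : ℝ) - 1 := by linarith
    have h2 : 0 ≤ 1 - Real.cos (π / N) := by
      have := Real.cos_le_one (π / N); linarith
    have h3 : 1 - Real.cos (π / N) ≤ 1 / N := by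
      calc 1 - Real.cos (π / N) ≤ π ^ 2 / (2 * N ^ 2) := h1c
        _ ≤ 2 * N / (2 * N ^ 2) := by
            apply div_le_div_of_nonneg_right hpisq; positivity
        _ = 1 / N := by field_simp
    calc (N : ℝ) * (((n : ℝ) - 1 - Real.cos (π / N)) * (1 - Real.cos (π / N)))
        ≤ (N : ℝ) * (((n : ℝ) - 1) * (1 / N)) := by
          apply mul_le_mul_of_nonneg_left _ (by linarith)
          exact mul_le_mul h1 h3 h2 (by linarith)
      _ = (n : ℝ) - 1 := by field_simp
  -- second RHS term > n - 1
  have hcosφ : Real.cos φ < 0 := by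
    apply Real.cos_neg_of_pi_div_two_lt_of_lt hφ1
    linarith
  have hsecond : (n : ℝ) - 1 < ((n : ℝ) - 1 - Real.cos φ) * (1 - Real.cos φ) := by
    nlinarith [Real.neg_one_le_cos φ]
  -- first RHS term ≥ 0
  have hfirst : 0 ≤ ((N : ℝ) - 1) * (((n : ℝ) - 1 - Real.cos ((π - φ) / ((N : ℝ) - 1)))
      * (1 - Real.cos ((π - φ) / ((N : ℝ) - 1)))) := by
    have h1 := Real.cos_le_one ((π - φ) / ((N : ℝ) - 1))
    have h2 : 0 ≤ (n : ℝ) - 1 - Real.cos ((π - φ) / ((N : ℝ) - 1)) := by linarith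
    have h3 : 0 ≤ 1 - Real.cos ((π - φ) / ((N : ℝ) - 1)) := by linarith
    exact mul_nonneg (by linarith) (mul_nonneg h2 h3)
  linarith
end

section
/- Let n ≥ 2 be an integer and φ ∈ (π/2, π]. Then 2 (n − 1 − sin(φ/2))(1 − sin(φ/2)) + (n − 1 − cos φ)(1 − cos φ) > (3/2)(n − 3/2). In other words, for N = 3 angles with one angle φ > π/2 and the other two equal to (π − φ)/2, the objective of the angle optimization strictly exceeds its value at the equal-angle configuration θ_i = π/3. -/
open Real

/-- Case `N = 3` of the angle optimization: for `n ≥ 2` and `φ ∈ (π/2, π]`,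
`2(n − 1 − sin(φ/2))(1 − sin(φ/2)) + (n − 1 − cos φ)(1 − cos φ) > (3/2)(n − 3/2)`. -/
theorem three_angle_case
    {n : ℕ} (hn : 2 ≤ n) (φ : ℝ) (hφ : φ ∈ Set.Ioc (π / 2) π) :
    3 / 2 * ((n : ℝ) - 3 / 2)
      < 2 * (((n : ℝ) - 1 - Real.sin (φ / 2)) * (1 - Real.sin (φ / 2)))
        + ((n : ℝ) - 1 - Real.cos φ) * (1 - Real.cos φ) := by
  obtain ⟨h1, h2⟩ := hφ
  have hpi := Real.pi_pos
  have hn2 : (2 : ℝ) ≤ (n : ℝ) := by exact_mod_cast hn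
  have hs : Real.sin (π / 6) < Real.sin (φ / 2) := by
    apply Real.sin_lt_sin_of_lt_of_le_pi_div_two
    · linarith
    · linarith
    · linarith
  rw [Real.sin_pi_div_six] at hs
  have hc : Real.cos φ = 1 - 2 * Real.sin (φ / 2) ^ 2 := by
    have h := Real.cos_two_mul (φ / 2)
    have h2 := Real.sin_sq_add_cos_sq (φ / 2)
    rw [show 2 * (φ / 2) = φ by ring] at h
    linarith
  rw [hc]
  nlinarith [sq_nonneg (2 * Real.sin (φ / 2) ^ 2 - 1 / 2),
    sq_nonneg (Real.sin (φ / 2) - 1 / 2),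
    mul_pos (sub_pos.mpr hs) (sub_pos.mpr hs)]
end
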